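/- arXiv:2112.01663 — 2 statements merged into one kernel-verified Lean document; each statement's English description precedes it below -/
import Mathlib

section
/- Let n ≥ 2 and let L ∈ ℝ^{n×n} be a matrix that is symmetric with respect to the Minkowski inner product. Suppose that L is null negative semi-definite but not null negative-definite. Then there exists a nonzero null vector x ∈ ℝⁿ and a real number λ such that L x = λ x. -/
/-!
If `x` is a nonzero null vector with `⟨Lx,x⟩ = 0`, then `x` maximizes `v ↦ ⟨Lv,v⟩` on the null cone.
Every `w ⊥ x` is the velocity at `x` of a null curve `x + t w + O(t²)`, so the first-order term
`2 t ⟨Lx,w⟩` must vanish: `Lx ∈ (x^⊥)^⊥`. For a nonzero null `x` this is the line `ℝx`, since a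
null vector with vanishing time component is zero.
-/

open Matrix Set

noncomputable section

/-- The Minkowski inner product on `ℝⁿ`: `⟨v,w⟩ = -v₀w₀ + Σ_{j≥1} vⱼwⱼ`. -/
def mink {n : ℕ} (v w : Fin n → ℝ) : ℝ :=
  ∑ j : Fin n, (if (j : ℕ) = 0 then -(v j * w j) else v j * w j)

/-- A vector is null if its Minkowski square vanishes. -/
def IsNull {n : ℕ} (v : Fin n → ℝ) : Prop := mink v v = 0

/-- A matrix is symmetric with respect to the Minkowski inner product. -/
def MinkSymm {n : ℕ} (L : Matrix (Fin n) (Fin n) ℝ) : Prop :=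
  ∀ v w : Fin n → ℝ, mink (L.mulVec v) w = mink v (L.mulVec w)

/-- A matrix is null negative-definite: `⟨Lv,v⟩ < 0` for all nonzero null `v`. -/
def NullNegDef {n : ℕ} (L : Matrix (Fin n) (Fin n) ℝ) : Prop :=
  ∀ v : Fin n → ℝ, v ≠ 0 → IsNull v → mink (L.mulVec v) v < 0

/-- A matrix is null negative semi-definite: `⟨Lv,v⟩ ≤ 0` for all null `v`. -/
def NullNegSemi {n : ℕ} (L : Matrix (Fin n) (Fin n) ℝ) : Prop :=
  ∀ v : Fin n → ℝ, IsNull v → mink (L.mulVec v) v ≤ 0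

/-- Entrywise derivative (within a set) of a matrix-valued function of a real variable. -/
def matDerivWithin {n : ℕ} (L : ℝ → Matrix (Fin n) (Fin n) ℝ) (s : Set ℝ) (t : ℝ) :
    Matrix (Fin n) (Fin n) ℝ :=
  Matrix.of fun i j => derivWithin (fun u => L u i j) s t

lemma eq_zero_of_forall_quartic_nonpos {a b c d : ℝ}
    (h : ∀ t : ℝ, a * t + b * t ^ 2 + c * t ^ 3 + d * t ^ 4 ≤ 0) : a = 0 := by
  have hmax : IsLocalMax (fun t : ℝ => a * t + b * t ^ 2 + c * t ^ 3 + d * t ^ 4) 0 :=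
    Filter.Eventually.of_forall fun t => by simpa using h t
  have hderiv : HasDerivAt (fun t : ℝ => a * t + b * t ^ 2 + c * t ^ 3 + d * t ^ 4) a 0 := by
    have := Polynomial.hasDerivAt (.C a * .X + .C b * .X ^ 2 + .C c * .X ^ 3 + .C d * .X ^ 4) 0
    simpa using this
  exact hmax.hasDerivAt_eq_zero hderiv

section Minkowski

variable {n : ℕ}

lemma mink_comm (v w : Fin n → ℝ) : mink v w = mink w v := by
  unfold mink
  congr 1 with j
  split_ifs <;> ring

lemma mink_add_left (u v w : Fin n → ℝ) : mink (u + v) w = mink u w + mink v w := by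
  unfold mink
  rw [← Finset.sum_add_distrib]
  congr 1 with j
  split_ifs <;> simp only [Pi.add_apply] <;> ring

lemma mink_sub_left (u v w : Fin n → ℝ) : mink (u - v) w = mink u w - mink v w := by
  unfold mink
  rw [← Finset.sum_sub_distrib]
  congr 1 with j
  split_ifs <;> simp only [Pi.sub_apply] <;> ring

lemma mink_smul_left (r : ℝ) (v w : Fin n → ℝ) : mink (r • v) w = r * mink v w := by
  unfold mink
  rw [Finset.mul_sum]
  congr 1 with j
  split_ifs <;> simp only [Pi.smul_apply, smul_eq_mul] <;> ring

lemma mink_add_right (u v w : Fin n → ℝ) : mink u (v + w) = mink u v + mink u w := by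
  rw [mink_comm, mink_add_left, mink_comm v, mink_comm w]

lemma mink_sub_right (u v w : Fin n → ℝ) : mink u (v - w) = mink u v - mink u w := by
  rw [mink_comm, mink_sub_left, mink_comm v, mink_comm w]

lemma mink_smul_right (r : ℝ) (v w : Fin n → ℝ) : mink v (r • w) = r * mink v w := by
  rw [mink_comm, mink_smul_left, mink_comm w]

lemma mink_self_eq_dotProduct_of_apply_zero [NeZero n] {v : Fin n → ℝ} (hv : v 0 = 0) :
    mink v v = v ⬝ᵥ v := by
  refine Finset.sum_congr rfl fun j _ => ?_
  split_ifs with hj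
  · rw [Fin.val_eq_zero_iff.mp hj, hv]
    simp
  · rfl

lemma IsNull.eq_zero_of_apply_zero [NeZero n] {v : Fin n → ℝ} (hv : IsNull v) (h0 : v 0 = 0) :
    v = 0 :=
  dotProduct_self_eq_zero.mp (mink_self_eq_dotProduct_of_apply_zero h0 ▸ hv)

lemma IsNull.apply_zero_ne_zero [NeZero n] {v : Fin n → ℝ} (hv : IsNull v) (hne : v ≠ 0) :
    v 0 ≠ 0 :=
  fun h0 => hne (hv.eq_zero_of_apply_zero h0)

def spatialReflection (v : Fin n → ℝ) : Fin n → ℝ :=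
  fun j => if (j : ℕ) = 0 then v j else -v j

lemma mink_spatialReflection_self (v : Fin n → ℝ) :
    mink (spatialReflection v) (spatialReflection v) = mink v v := by
  unfold mink spatialReflection
  congr 1 with j
  split_ifs <;> ring

lemma mink_spatialReflection (v : Fin n → ℝ) : mink v (spatialReflection v) = -(v ⬝ᵥ v) := by
  unfold mink spatialReflection dotProduct
  rw [← Finset.sum_neg_distrib]
  congr 1 with j
  split_ifs <;> ring

lemma IsNull.exists_isNull_mink_ne_zero {x : Fin n → ℝ} (hx : IsNull x) (hx0 : x ≠ 0) :
    ∃ z, IsNull z ∧ mink x z ≠ 0 :=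
  ⟨spatialReflection x, (mink_spatialReflection_self x).trans hx,
    by simpa [mink_spatialReflection] using hx0⟩

/-- The `t²`-correction along `z` cancels the `t² ⟨w,w⟩` term. -/
lemma isNull_add_smul_add_smul {x z w : Fin n → ℝ} (hx : IsNull x) (hz : IsNull z)
    (hxz : mink x z ≠ 0) (hxw : mink x w = 0) (hzw : mink z w = 0) (t : ℝ) :
    IsNull (x + t • w + (t ^ 2 * (-mink w w / (2 * mink x z))) • z) := by
  unfold IsNull at *
  simp only [mink_add_left, mink_add_right, mink_smul_left, mink_smul_right]
  rw [mink_comm w x, mink_comm z x, mink_comm w z, hx, hz, hxw, hzw]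
  field_simp
  ring

lemma exists_eq_smul_of_forall_mink_eq_zero [NeZero n] {x u : Fin n → ℝ} (hx : IsNull x)
    (hx0 : x ≠ 0) (hu : ∀ w, mink x w = 0 → mink u w = 0) : ∃ c : ℝ, u = c • x := by
  have hx00 : x 0 ≠ 0 := hx.apply_zero_ne_zero hx0
  set c := u 0 / x 0
  have hxu : mink x u = 0 := by rw [mink_comm]; exact hu x hx
  have hxw : mink x (u - c • x) = 0 := by
    rw [mink_sub_right, mink_smul_right, hxu, hx]; ring
  have hw : IsNull (u - c • x) := by
    unfold IsNull
    rw [mink_sub_left, mink_smul_left, hu _ hxw, hxw]; ring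
  have hw0 : (u - c • x) 0 = 0 := by
    simp only [Pi.sub_apply, Pi.smul_apply, smul_eq_mul, c]
    field_simp
    ring
  exact ⟨c, sub_eq_zero.mp (hw.eq_zero_of_apply_zero hw0)⟩

end Minkowski

section NullCone

variable {n : ℕ} {L : Matrix (Fin n) (Fin n) ℝ}

lemma MinkSymm.mink_mulVec_comm (hL : MinkSymm L) (v w : Fin n → ℝ) :
    mink (L *ᵥ v) w = mink (L *ᵥ w) v := by
  rw [hL, mink_comm]

/-- Along the null curve of `isNull_add_smul_add_smul`, `⟨Ly,y⟩ ≤ 0` is a quartic in `t` vanishing at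
`0` with linear coefficient `2⟨Lx,w⟩`. -/
lemma NullNegSemi.mink_mulVec_eq_zero_of_orthogonal_of_orthogonal (hsemi : NullNegSemi L)
    (hL : MinkSymm L) {x z w : Fin n → ℝ} (hx : IsNull x) (hLx : mink (L *ᵥ x) x = 0)
    (hz : IsNull z) (hxz : mink x z ≠ 0) (hxw : mink x w = 0) (hzw : mink z w = 0) :
    mink (L *ᵥ x) w = 0 := by
  set μ := -mink w w / (2 * mink x z)
  have hquartic (t : ℝ) : 2 * mink (L *ᵥ x) w * t
      + (mink (L *ᵥ w) w + 2 * μ * mink (L *ᵥ x) z) * t ^ 2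
      + 2 * μ * mink (L *ᵥ w) z * t ^ 3 + μ ^ 2 * mink (L *ᵥ z) z * t ^ 4 ≤ 0 := by
    have h := hsemi _ (isNull_add_smul_add_smul hx hz hxz hxw hzw t)
    simp only [mulVec_add, mulVec_smul, mink_add_left, mink_add_right, mink_smul_left,
      mink_smul_right] at h
    rw [hL.mink_mulVec_comm w x, hL.mink_mulVec_comm z x, hL.mink_mulVec_comm z w, hLx] at h
    linear_combination h
  simpa using eq_zero_of_forall_quartic_nonpos hquartic

/-- Shifting `w` by a multiple of `x` makes it orthogonal to `z` as well, without changing `⟨x,w⟩`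
or `⟨Lx,w⟩`. -/
lemma NullNegSemi.mink_mulVec_eq_zero_of_orthogonal (hsemi : NullNegSemi L) (hL : MinkSymm L)
    {x : Fin n → ℝ} (hx : IsNull x) (hx0 : x ≠ 0) (hLx : mink (L *ᵥ x) x = 0)
    {w : Fin n → ℝ} (hxw : mink x w = 0) : mink (L *ᵥ x) w = 0 := by
  obtain ⟨z, hz, hxz⟩ := hx.exists_isNull_mink_ne_zero hx0
  have hzx : mink z x ≠ 0 := by rwa [mink_comm]
  set c := mink z w / mink z x
  have key := hsemi.mink_mulVec_eq_zero_of_orthogonal_of_orthogonal hL hx hLx hz hxz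
    (w := w - c • x) (by rw [mink_sub_right, mink_smul_right, hxw, hx]; ring)
    (by rw [mink_sub_right, mink_smul_right, div_mul_cancel₀ _ hzx, sub_self])
  rwa [mink_sub_right, mink_smul_right, hLx, mul_zero, sub_zero] at key

end NullCone

theorem stmt_0_general {n : ℕ} (L : Matrix (Fin n) (Fin n) ℝ)
    (hsymm : MinkSymm L) (hsemi : NullNegSemi L) (hnotdef : ¬ NullNegDef L) :
    ∃ (x : Fin n → ℝ) (lam : ℝ), x ≠ 0 ∧ IsNull x ∧ L.mulVec x = lam • x := by
  obtain ⟨x, hx0, hx, hLx⟩ : ∃ x, x ≠ 0 ∧ IsNull x ∧ 0 ≤ mink (L *ᵥ x) x := by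
    simpa [NullNegDef] using hnotdef
  have : NeZero n := ⟨by rintro rfl; exact hx0 (Subsingleton.elim _ _)⟩
  have hLx : mink (L *ᵥ x) x = 0 := le_antisymm (hsemi x hx) hLx
  obtain ⟨lam, hlam⟩ := exists_eq_smul_of_forall_mink_eq_zero hx hx0
    fun _ hw => hsemi.mink_mulVec_eq_zero_of_orthogonal hsymm hx hx0 hLx hw
  exact ⟨x, lam, hx0, hx, hlam⟩

/-- null eigenvector lemma: a Minkowski-symmetric matrix that is
null negative semi-definite but not null negative-definite has a nonzero null
eigenvector. -/
theorem stmt_0 {n : ℕ} (hn : 2 ≤ n) (L : Matrix (Fin n) (Fin n) ℝ)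
    (hsymm : MinkSymm L) (hsemi : NullNegSemi L) (hnotdef : ¬ NullNegDef L) :
    ∃ (x : Fin n → ℝ) (lam : ℝ), x ≠ 0 ∧ IsNull x ∧ L.mulVec x = lam • x :=
  stmt_0_general L hsymm hsemi hnotdef
end
end

section
/- Let n ≥ 2 and T > 0. Let B : [0,T] → ℝ^{n×n} be C² and let L : [0,T] → ℝ^{n×n} be C³ satisfying t L′(t) + L(t)² − L(t) + t² B(t) = 0 for all t ∈ [0,T], with L(0) = id. Then L″(0) = −(2/3) B(0). -/
open Matrix Set

noncomputable section

/-!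
Written as `t • L' = L - L² - t² • B`, the equation has the shape `t • φ = ψ`; differentiating such
an identity gives `φ + t • φ' = ψ'`, so at `t = 0` one reads off `φ 0 = ψ' 0`. Applied to `φ = L'`
this gives `L'(0) = L'(0) - 2 L'(0)`, i.e. `L'(0) = 0`, and leaves the identity
`t • L'' = -(L' L + L L') - 2t • B - t² • B'`. Applying the same step to `φ = L''` gives
`L''(0) = -2 L''(0) - 2 B(0)`. The argument runs in any real normed algebra; matrices are given
the `L∞`-operator norm, for which the Fréchet derivative is computed entrywise.
-/

section SmulDeriv

variable {𝕜 E : Type*} [NontriviallyNormedField 𝕜] [NormedAddCommGroup E] [NormedSpace 𝕜 E]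
  {φ ψ : 𝕜 → E} {s : Set 𝕜} {x : 𝕜}

theorem add_smul_derivWithin_eq_of_smul_eq (h : ∀ t ∈ s, t • φ t = ψ t) (hx : x ∈ s)
    (hs : UniqueDiffWithinAt 𝕜 s x) (hφ : DifferentiableWithinAt 𝕜 φ s x) :
    φ x + x • derivWithin φ s x = derivWithin ψ s x := by
  have hd := (hasDerivWithinAt_id x s).fun_smul hφ.hasDerivWithinAt
  simp only [id, one_smul] at hd
  rw [← derivWithin_congr h (h x hx), hd.derivWithin hs, add_comm]

end SmulDeriv

section Riccati

variable {𝔸 : Type*} [NormedRing 𝔸] [NormedAlgebra ℝ 𝔸] {s : Set ℝ} {L B : ℝ → 𝔸}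

theorem smul_derivWithin_derivWithin_of_riccati (hs : UniqueDiffOn ℝ s)
    (hL : ContDiffOn ℝ 2 L s) (hB : DifferentiableOn ℝ B s)
    (hRic : ∀ t ∈ s, t • derivWithin L s t + L t * L t - L t + t ^ 2 • B t = 0) :
    ∀ t ∈ s, t • derivWithin (derivWithin L s) s t =
      -(derivWithin L s t * L t + L t * derivWithin L s t)
        - ((2 * t) • B t + t ^ 2 • derivWithin B s t) := by
  intro t ht
  have hL' : DifferentiableOn ℝ (derivWithin L s) s :=
    (hL.derivWithin hs (m := 1) (by norm_num)).differentiableOn one_ne_zero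
  have hLd : HasDerivWithinAt L (derivWithin L s t) s t :=
    ((hL.differentiableOn (by norm_num)) t ht).hasDerivWithinAt
  have hBd : HasDerivWithinAt B (derivWithin B s t) s t := (hB t ht).hasDerivWithinAt
  have hF : HasDerivWithinAt (fun u => L u - L u * L u - u ^ 2 • B u)
      (derivWithin L s t - (derivWithin L s t * L t + L t * derivWithin L s t)
        - (t ^ 2 • derivWithin B s t + (2 * t) • B t)) s t := by
    have hsq : HasDerivWithinAt (fun u : ℝ => u ^ 2) (2 * t) s t := by
      simpa using hasDerivWithinAt_pow 2 t
    exact (hLd.fun_sub (hLd.fun_mul hLd)).fun_sub (hsq.fun_smul hBd)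
  have key := add_smul_derivWithin_eq_of_smul_eq (ψ := fun u => L u - L u * L u - u ^ 2 • B u)
    (fun u hu => by rw [← sub_eq_zero, ← hRic u hu]; abel) ht (hs t ht) (hL' t ht)
  rw [hF.derivWithin (hs t ht)] at key
  linear_combination (norm := module) key

theorem derivWithin_zero_eq_zero_of_riccati (hs : UniqueDiffOn ℝ s) (h0 : 0 ∈ s)
    (hL : ContDiffOn ℝ 2 L s) (hB : DifferentiableOn ℝ B s) (hL0 : L 0 = 1)
    (hRic : ∀ t ∈ s, t • derivWithin L s t + L t * L t - L t + t ^ 2 • B t = 0) :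
    derivWithin L s 0 = 0 := by
  have h := smul_derivWithin_derivWithin_of_riccati hs hL hB hRic 0 h0
  simp only [zero_smul, hL0, mul_one, one_mul, mul_zero, zero_pow two_ne_zero, add_zero,
    sub_zero] at h
  have h2 : (2 : ℝ) • derivWithin L s 0 = 0 := by
    linear_combination (norm := module) h
  exact (smul_eq_zero.mp h2).resolve_left two_ne_zero

theorem derivWithin_derivWithin_zero_of_riccati (hs : UniqueDiffOn ℝ s) (h0 : 0 ∈ s)
    (hL : ContDiffOn ℝ 3 L s) (hB : ContDiffOn ℝ 2 B s) (hL0 : L 0 = 1)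
    (hRic : ∀ t ∈ s, t • derivWithin L s t + L t * L t - L t + t ^ 2 • B t = 0) :
    derivWithin (derivWithin L s) s 0 = -(2 / 3 : ℝ) • B 0 := by
  have hL'C : ContDiffOn ℝ 2 (derivWithin L s) s := hL.derivWithin hs (by norm_num)
  have hL''C : ContDiffOn ℝ 1 (derivWithin (derivWithin L s) s) s :=
    hL'C.derivWithin hs (by norm_num)
  have hB'C : ContDiffOn ℝ 1 (derivWithin B s) s := hB.derivWithin hs (by norm_num)
  have hL'0 : derivWithin L s 0 = 0 := derivWithin_zero_eq_zero_of_riccati hs h0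
    (hL.of_le (by norm_num)) (hB.differentiableOn (by norm_num)) hL0 hRic
  have hLd := (hL.differentiableOn (by norm_num) 0 h0).hasDerivWithinAt
  have hL'd := (hL'C.differentiableOn (by norm_num) 0 h0).hasDerivWithinAt
  have hBd := (hB.differentiableOn (by norm_num) 0 h0).hasDerivWithinAt
  have hB'd := (hB'C.differentiableOn (by norm_num) 0 h0).hasDerivWithinAt
  have h2t : HasDerivWithinAt (fun u : ℝ => 2 * u) 2 s 0 := by
    simpa using (hasDerivWithinAt_id (0 : ℝ) s).const_mul (2 : ℝ)
  have hsq : HasDerivWithinAt (fun u : ℝ => u ^ 2) 0 s 0 := by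
    simpa using hasDerivWithinAt_pow 2 (0 : ℝ)
  have hG := ((hL'd.fun_mul hLd).fun_add (hLd.fun_mul hL'd)).fun_neg.fun_sub
    ((h2t.fun_smul hBd).fun_add (hsq.fun_smul hB'd))
  have key := add_smul_derivWithin_eq_of_smul_eq
    (smul_derivWithin_derivWithin_of_riccati hs (hL.of_le (by norm_num))
      (hB.differentiableOn (by norm_num)) hRic) h0 (hs 0 h0)
    (hL''C.differentiableOn (by norm_num) 0 h0)
  rw [hG.derivWithin (hs 0 h0)] at key
  simp only [hL'0, hL0, mul_one, one_mul, mul_zero, zero_smul, zero_pow two_ne_zero, add_zero,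
    zero_add] at key
  linear_combination (norm := module) (1 / 3 : ℝ) • key

end Riccati

theorem matDerivWithin_congr {n : ℕ} {L₁ L₂ : ℝ → Matrix (Fin n) (Fin n) ℝ} {s : Set ℝ} {t : ℝ}
    (hs : EqOn L₁ L₂ s) (ht : L₁ t = L₂ t) : matDerivWithin L₁ s t = matDerivWithin L₂ s t := by
  ext i j
  exact derivWithin_congr (fun u hu => by rw [hs hu]) (by rw [ht])

section LinftyOp

attribute [local instance] Matrix.linftyOpNormedRing Matrix.linftyOpNormedAlgebra

theorem contDiffOn_matrix_iff {E ι : Type*} [NormedAddCommGroup E] [NormedSpace ℝ E]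
    [Fintype ι] [DecidableEq ι] {k : WithTop ℕ∞} {L : E → Matrix ι ι ℝ} {s : Set E} :
    ContDiffOn ℝ k L s ↔ ∀ i j, ContDiffOn ℝ k (fun t => L t i j) s := by
  let e : Matrix ι ι ℝ ≃L[ℝ] (ι → ι → ℝ) :=
    (Matrix.ofLinearEquiv ℝ).symm.toContinuousLinearEquiv
  rw [← e.comp_contDiffOn_iff, contDiffOn_pi]
  simp only [contDiffOn_pi]
  rfl

theorem matDerivWithin_eq_derivWithin {n : ℕ} {L : ℝ → Matrix (Fin n) (Fin n) ℝ} {s : Set ℝ}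
    {t : ℝ} (hs : UniqueDiffWithinAt ℝ s t) (hL : DifferentiableWithinAt ℝ L s t) :
    matDerivWithin L s t = derivWithin L s t := by
  ext i j
  exact ((Matrix.entryLinearMap ℝ ℝ i j).toContinuousLinearMap.hasFDerivAt.comp_hasDerivWithinAt
    t hL.hasDerivWithinAt).derivWithin hs

end LinftyOp

theorem stmt_5_general {n : ℕ} (T : ℝ) (hT : 0 < T)
    (B L : ℝ → Matrix (Fin n) (Fin n) ℝ)
    (hB : ∀ i j, ContDiffOn ℝ 2 (fun t => B t i j) (Set.Icc 0 T))
    (hL : ∀ i j, ContDiffOn ℝ 3 (fun t => L t i j) (Set.Icc 0 T))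
    (hL0 : L 0 = 1)
    (hRic : ∀ t ∈ Set.Icc (0 : ℝ) T,
      t • matDerivWithin L (Set.Icc 0 T) t + L t * L t - L t + t ^ 2 • B t = 0) :
    matDerivWithin (fun t => matDerivWithin L (Set.Icc 0 T) t) (Set.Icc 0 T) 0
      = -(2 / 3 : ℝ) • B 0 := by
  let _ := Matrix.linftyOpNormedRing (n := Fin n) (α := ℝ)
  let _ := Matrix.linftyOpNormedAlgebra (R := ℝ) (n := Fin n) (α := ℝ)
  have hs : UniqueDiffOn ℝ (Icc 0 T) := uniqueDiffOn_Icc hT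
  have h0 : (0 : ℝ) ∈ Icc 0 T := left_mem_Icc.2 hT.le
  have hLC : ContDiffOn ℝ 3 L (Icc 0 T) := contDiffOn_matrix_iff.2 hL
  have hL' : EqOn (matDerivWithin L (Icc 0 T)) (derivWithin L (Icc 0 T)) (Icc 0 T) :=
    fun t ht => matDerivWithin_eq_derivWithin (hs t ht) (hLC.differentiableOn (by norm_num) t ht)
  calc matDerivWithin (matDerivWithin L (Icc 0 T)) (Icc 0 T) 0
      = matDerivWithin (derivWithin L (Icc 0 T)) (Icc 0 T) 0 := matDerivWithin_congr hL' (hL' h0)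
    _ = derivWithin (derivWithin L (Icc 0 T)) (Icc 0 T) 0 :=
      matDerivWithin_eq_derivWithin (hs 0 h0)
        (((hLC.derivWithin hs (m := 2) (by norm_num)).differentiableOn (by norm_num)) 0 h0)
    _ = -(2 / 3 : ℝ) • B 0 :=
      derivWithin_derivWithin_zero_of_riccati hs h0 hLC (contDiffOn_matrix_iff.2 hB) hL0
        fun t ht => by have := hRic t ht; rwa [hL' ht] at this

/-- for a `C³` solution of `t L' + L² - L + t² B = 0` on `[0,T]` with
`B` of class `C²` and `L(0) = id`, the second derivative at `t = 0` equals `-(2/3) B(0)`. -/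
theorem stmt_5 {n : ℕ} (hn : 2 ≤ n) (T : ℝ) (hT : 0 < T)
    (B L : ℝ → Matrix (Fin n) (Fin n) ℝ)
    (hB : ∀ i j, ContDiffOn ℝ 2 (fun t => B t i j) (Set.Icc 0 T))
    (hL : ∀ i j, ContDiffOn ℝ 3 (fun t => L t i j) (Set.Icc 0 T))
    (hL0 : L 0 = 1)
    (hRic : ∀ t ∈ Set.Icc (0 : ℝ) T,
      t • matDerivWithin L (Set.Icc 0 T) t + L t * L t - L t + t ^ 2 • B t = 0) :
    matDerivWithin (fun t => matDerivWithin L (Set.Icc 0 T) t) (Set.Icc 0 T) 0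
      = -(2 / 3 : ℝ) • B 0 :=
  stmt_5_general T hT B L hB hL hL0 hRic
end
end
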